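/- Suppose f is a harmonic mapping on the closed disk {z : |z − a| ≤ r}, where r > 0. Then Λ_f(a) ≤ (2/(π r)) ∫_0^{2π} |f(a) − f(a + r e^{iθ})| dθ. -/

import Mathlib

open Complex MeasureTheory Metric Set Real
open scoped ENNReal

/-- The Wirtinger derivative `f_z = (f_x - i f_y)/2` of `f` at `z`
(real Fréchet derivative applied to the directions `1` and `i`). -/
noncomputable def wirtingerZ (f : ℂ → ℂ) (z : ℂ) : ℂ :=
  (fderiv ℝ f z 1 - Complex.I * fderiv ℝ f z Complex.I) / 2

/-- The Wirtinger derivative `f_z̄ = (f_x + i f_y)/2` of `f` at `z`. -/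
noncomputable def wirtingerZbar (f : ℂ → ℂ) (z : ℂ) : ℂ :=
  (fderiv ℝ f z 1 + Complex.I * fderiv ℝ f z Complex.I) / 2

/-- `Λ_f(z) = |f_z(z)| + |f_z̄(z)|`. -/
noncomputable def Lam (f : ℂ → ℂ) (z : ℂ) : ℝ :=
  ‖wirtingerZ f z‖ + ‖wirtingerZbar f z‖

/-- A complex-valued function is harmonic on a set: it is `C²` there and its
Laplacian `f_xx + f_yy` vanishes (equivalently, its real and imaginary parts are
real harmonic). -/
def IsHarmonicOn (f : ℂ → ℂ) (s : Set ℂ) : Prop :=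
  ContDiffOn ℝ 2 f s ∧ ∀ z ∈ s,
    fderiv ℝ (fun w => fderiv ℝ f w 1) z 1
      + fderiv ℝ (fun w => fderiv ℝ f w Complex.I) z Complex.I = 0

/-- A majorant: a continuous increasing function `ω : [0,∞) → [0,∞)` with
`ω 0 = 0` such that `ω t / t` is non-increasing for `t > 0`. -/
def IsMajorant (ω : ℝ → ℝ) : Prop :=
  ContinuousOn ω (Ici 0) ∧ MonotoneOn ω (Ici 0) ∧ ω 0 = 0 ∧
    ∀ s t : ℝ, 0 < s → s ≤ t → ω t / t ≤ ω s / s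

/-! On the disk, `f - f a = H + conj G` with `H`, `G` holomorphic, so that `f_z(a) = H'(a)` and
`f_z̄(a) = conj G'(a)`. As `conj (z - a) = s² / (z - a)` on the circle of radius `s`, the Cauchy
formula for `H'(a)` and the mean value property of `(z - a) G z` show that `s² f_z(a)` is the circle
average of `conj (z - a) (f z - f a)`, and symmetrically `s² f_z̄(a)` that of `(z - a) (f z - f a)`.
Each is at most `s` times the average of `|f z - f a|`, which gives
`s Λ_f(a) ≤ 2 avg_{|z - a| = s} |f z - f a|` for `s < r`; the circle average is continuous in the
radius up to `r`, where `f` is only continuous. -/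

open InnerProductSpace ComplexConjugate Topology

theorem IsHarmonicOn.harmonicOnNhd {f : ℂ → ℂ} {s : Set ℂ} (hs : IsOpen s)
    (hf : IsHarmonicOn f s) : HarmonicOnNhd f s := by
  intro x hx
  refine ⟨(hf.1 x hx).contDiffAt (hs.mem_nhds hx), ?_⟩
  filter_upwards [hs.mem_nhds hx] with y hy
  have h2 : ContDiffAt ℝ 2 f y := (hf.1 y hy).contDiffAt (hs.mem_nhds hy)
  have hd : DifferentiableAt ℝ (fderiv ℝ f) y :=
    (h2.fderiv_right (m := 1) le_rfl).differentiableAt one_ne_zero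
  have := hf.2 y hy
  rw [fderiv_clm_apply hd (differentiableAt_const _),
    fderiv_clm_apply hd (differentiableAt_const _)] at this
  simpa [laplacian_eq_iteratedFDeriv_complexPlane, iteratedFDeriv_two_apply] using this

theorem InnerProductSpace.HarmonicOnNhd.exists_add_conj_ball {f : ℂ → ℂ} {c : ℂ} {R : ℝ}
    (hf : HarmonicOnNhd f (ball c R)) :
    ∃ H G : ℂ → ℂ, DifferentiableOn ℂ H (ball c R) ∧ DifferentiableOn ℂ G (ball c R) ∧
      EqOn f (fun z => H z + conj (G z)) (ball c R) := by
  -- `f = Re F₁ + i Re F₂`, and `Re F = (F + conj F) / 2`.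
  obtain ⟨F₁, hF₁, hre⟩ := (hf.comp_CLM reCLM).exists_analyticOnNhd_ball_re_eq
  obtain ⟨F₂, hF₂, him⟩ := (hf.comp_CLM imCLM).exists_analyticOnNhd_ball_re_eq
  refine ⟨fun z => (F₁ z + I * F₂ z) / 2, fun z => (F₁ z - I * F₂ z) / 2,
    ((hF₁.differentiableOn.add (hF₂.differentiableOn.const_mul I)).div_const 2),
    ((hF₁.differentiableOn.sub (hF₂.differentiableOn.const_mul I)).div_const 2), fun z hz => ?_⟩
  have h1 := hre hz
  have h2 := him hz
  simp only [Function.comp_apply, reCLM_apply, imCLM_apply] at h1 h2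
  apply Complex.ext <;>
    simp only [add_re, add_im, sub_re, sub_im, mul_re, mul_im, conj_re, conj_im, div_ofNat_re,
      div_ofNat_im, I_re, I_im, h1, h2] <;>
    ring

theorem fderiv_add_conj_apply {H G : ℂ → ℂ} {z : ℂ} (hH : DifferentiableAt ℂ H z)
    (hG : DifferentiableAt ℂ G z) (v : ℂ) :
    fderiv ℝ (fun w => H w + conj (G w)) z v = deriv H z * v + conj (deriv G z * v) := by
  have hG' := (conjCLE.toContinuousLinearMap.hasFDerivAt (x := G z)).comp z
    (hG.hasDerivAt.hasFDerivAt.restrictScalars ℝ)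
  rw [HasFDerivAt.fderiv (f := fun w => H w + conj (G w))
    ((hH.hasDerivAt.hasFDerivAt.restrictScalars ℝ).add hG')]
  simp [mul_comm]

theorem wirtingerZ_add_conj {H G : ℂ → ℂ} {z : ℂ} (hH : DifferentiableAt ℂ H z)
    (hG : DifferentiableAt ℂ G z) :
    wirtingerZ (fun w => H w + conj (G w)) z = deriv H z := by
  simp only [wirtingerZ, fderiv_add_conj_apply hH hG, map_mul, conj_I, map_one]
  linear_combination (conj (deriv G z) - deriv H z) / 2 * I_sq

theorem wirtingerZbar_add_conj {H G : ℂ → ℂ} {z : ℂ} (hH : DifferentiableAt ℂ H z)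
    (hG : DifferentiableAt ℂ G z) :
    wirtingerZbar (fun w => H w + conj (G w)) z = conj (deriv G z) := by
  simp only [wirtingerZbar, fderiv_add_conj_apply hH hG, map_mul, conj_I, map_one]
  linear_combination (deriv H z / 2) * I_sq - conj (deriv G z) / 2 * I_sq

theorem Filter.EventuallyEq.lam_eq {f g : ℂ → ℂ} {z : ℂ} (h : f =ᶠ[𝓝 z] g) :
    Lam f z = Lam g z := by
  simp only [Lam, wirtingerZ, wirtingerZbar, h.fderiv_eq]

theorem lam_sub_const (f : ℂ → ℂ) (c z : ℂ) : Lam (fun w => f w - c) z = Lam f z := by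
  simp only [Lam, wirtingerZ, wirtingerZbar, fderiv_sub_const]

theorem circleAverage_conj (f : ℂ → ℂ) (c : ℂ) (R : ℝ) :
    circleAverage (fun z => conj (f z)) c R = conj (circleAverage f c R) := by
  simp only [circleAverage_def, intervalIntegral.intervalIntegral_conj, Complex.real_smul, map_mul,
    conj_ofReal]

theorem norm_circleAverage_le {E : Type*} [NormedAddCommGroup E] [NormedSpace ℝ E]
    (f : ℂ → E) (c : ℂ) (R : ℝ) :
    ‖circleAverage f c R‖ ≤ circleAverage (fun z => ‖f z‖) c R := by
  simp only [circleAverage_def, norm_smul, smul_eq_mul, norm_inv, Real.norm_eq_abs,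
    abs_of_pos two_pi_pos]
  gcongr
  exact intervalIntegral.norm_integral_le_integral_norm two_pi_pos.le

theorem norm_circleAverage_mul_le {w φ : ℂ → ℂ} {c : ℂ} {R : ℝ} (hR : 0 ≤ R)
    (hw : ∀ z ∈ sphere c R, ‖w z‖ = R) :
    ‖circleAverage (fun z => w z * φ z) c R‖ ≤ R * circleAverage (fun z => ‖φ z‖) c R := by
  calc ‖circleAverage (fun z => w z * φ z) c R‖
      ≤ circleAverage (fun z => ‖w z * φ z‖) c R := norm_circleAverage_le _ c R
    _ = circleAverage (fun z => R • ‖φ z‖) c R := by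
      refine circleAverage_congr_sphere fun z hz => ?_
      rw [abs_of_nonneg hR] at hz
      simp [hw z hz]
    _ = R * circleAverage (fun z => ‖φ z‖) c R := circleAverage_fun_smul

theorem circleAverage_sub_center_mul_eq_zero {K : ℂ → ℂ} {c : ℂ} {R : ℝ} (hR : 0 ≤ R)
    (hK : DifferentiableOn ℂ K (closedBall c R)) :
    circleAverage (fun z => (z - c) * K z) c R = 0 := by
  have hd : DifferentiableOn ℂ (fun z => (z - c) * K z) (closedBall c |R|) := by
    rw [abs_of_nonneg hR]
    exact ((differentiableOn_id.sub_const c).mul hK)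
  simpa using (hd.diffContOnCl_ball subset_rfl).circleAverage

theorem circleAverage_conj_sub_center_mul_eq {H : ℂ → ℂ} {U : Set ℂ} {c : ℂ} {R : ℝ}
    (hU : IsOpen U) (hR : 0 < R) (hc : closedBall c R ⊆ U) (hH : DifferentiableOn ℂ H U) :
    circleAverage (fun z => conj (z - c) * H z) c R = R ^ 2 * deriv H c := by
  -- On the circle `conj (z - c) = R ^ 2 / (z - c)`: this is the Cauchy formula for `deriv H c`.
  rw [circleAverage_eq_circleIntegral (F := ℂ) hR.ne', ← cderiv_eq_deriv hU hH hR hc, cderiv,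
    mul_smul_comm]
  congr 1
  rw [← smul_eq_mul ((R : ℂ) ^ 2), ← circleIntegral.integral_smul]
  refine circleIntegral.integral_congr hR.le fun z hz => ?_
  have hz' : ‖z - c‖ = R := by simpa [dist_eq_norm] using hz
  have hne : z - c ≠ 0 := by
    rw [← norm_ne_zero_iff, hz']; exact hR.ne'
  have hconj : conj (z - c) = (R : ℂ) ^ 2 / (z - c) := by
    rw [eq_div_iff hne, mul_comm, Complex.mul_conj', hz']
  simp only [smul_eq_mul, hconj]
  field_simp

section HolomorphicPlusAntiholomorphic

variable {H K : ℂ → ℂ} {U : Set ℂ} {c : ℂ} {R : ℝ}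

theorem circleAverage_conj_sub_center_mul_add_conj (hU : IsOpen U) (hR : 0 < R)
    (hc : closedBall c R ⊆ U) (hH : DifferentiableOn ℂ H U) (hK : DifferentiableOn ℂ K U) :
    circleAverage (fun z => conj (z - c) * (H z + conj (K z))) c R = R ^ 2 * deriv H c := by
  have hsphere := sphere_subset_closedBall.trans hc
  have hint₁ : CircleIntegrable (fun z => conj (z - c) * H z) c R :=
    ((continuous_conj.comp (continuous_sub_right c)).continuousOn.mul
      (hH.continuousOn.mono hsphere)).circleIntegrable hR.le
  have hint₂ : CircleIntegrable (fun z => conj ((z - c) * K z)) c R :=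
    (continuous_conj.comp_continuousOn ((continuous_sub_right c).continuousOn.mul
      (hK.continuousOn.mono hsphere))).circleIntegrable hR.le
  calc circleAverage (fun z => conj (z - c) * (H z + conj (K z))) c R
      = circleAverage ((fun z => conj (z - c) * H z) + fun z => conj ((z - c) * K z)) c R := by
        congr 1; ext z; simp only [Pi.add_apply, map_mul]; ring
    _ = R ^ 2 * deriv H c := by
      rw [circleAverage_add hint₁ hint₂, circleAverage_conj,
        circleAverage_sub_center_mul_eq_zero hR.le (hK.mono hc),
        circleAverage_conj_sub_center_mul_eq hU hR hc hH, map_zero, add_zero]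

theorem circleAverage_sub_center_mul_add_conj (hU : IsOpen U) (hR : 0 < R)
    (hc : closedBall c R ⊆ U) (hH : DifferentiableOn ℂ H U) (hK : DifferentiableOn ℂ K U) :
    circleAverage (fun z => (z - c) * (H z + conj (K z))) c R = R ^ 2 * conj (deriv K c) := by
  have h := circleAverage_conj_sub_center_mul_add_conj hU hR hc hK hH
  have hfun : (fun z => (z - c) * (H z + conj (K z)))
      = fun z => conj (conj (z - c) * (K z + conj (H z))) := by
    ext z; simp only [map_mul, map_add, conj_conj]; ring
  rw [hfun, circleAverage_conj, h, map_mul, map_pow, conj_ofReal]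

end HolomorphicPlusAntiholomorphic

theorem IsHarmonicOn.mul_lam_le {f : ℂ → ℂ} {a : ℂ} {r s : ℝ} (hf : IsHarmonicOn f (ball a r))
    (hs : 0 < s) (hsr : s < r) :
    s * Lam f a ≤ 2 * circleAverage (fun z => ‖f z - f a‖) a s := by
  obtain ⟨H, G, hH, hG, hfHG⟩ :=
    ((hf.harmonicOnNhd isOpen_ball).sub (harmonicOnNhd_const (f a))).exists_add_conj_ball
  replace hfHG : EqOn (fun z => f z - f a) (fun z => H z + conj (G z)) (ball a r) := hfHG
  have hc : closedBall a s ⊆ ball a r := closedBall_subset_ball hsr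
  have ha : ball a r ∈ 𝓝 a := ball_mem_nhds a (hs.trans hsr)
  have hLam : Lam f a = ‖deriv H a‖ + ‖deriv G a‖ := by
    rw [← lam_sub_const f (f a), (hfHG.eventuallyEq_of_mem ha).lam_eq, Lam,
      wirtingerZ_add_conj (hH.differentiableAt ha) (hG.differentiableAt ha),
      wirtingerZbar_add_conj (hH.differentiableAt ha) (hG.differentiableAt ha), norm_conj]
  have hnorm : ∀ z ∈ sphere a s, ‖z - a‖ = s := fun z hz => by simpa [dist_eq_norm] using hz
  have hcongr : ∀ w : ℂ → ℂ, circleAverage (fun z => w z * (f z - f a)) a s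
      = circleAverage (fun z => w z * (H z + conj (G z))) a s := fun w =>
    circleAverage_congr_sphere fun z hz => by
      rw [abs_of_pos hs] at hz
      exact congrArg (w z * ·) (hfHG (hc (sphere_subset_closedBall hz)))
  have hzH : s ^ 2 * ‖deriv H a‖ ≤ s * circleAverage (fun z => ‖f z - f a‖) a s := by
    calc s ^ 2 * ‖deriv H a‖
        = ‖circleAverage (fun z => conj (z - a) * (f z - f a)) a s‖ := by
          rw [hcongr, circleAverage_conj_sub_center_mul_add_conj isOpen_ball hs hc hH hG]
          simp [abs_of_pos hs]
      _ ≤ s * circleAverage (fun z => ‖f z - f a‖) a s :=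
          norm_circleAverage_mul_le hs.le fun z hz => by rw [norm_conj, hnorm z hz]
  have hzG : s ^ 2 * ‖deriv G a‖ ≤ s * circleAverage (fun z => ‖f z - f a‖) a s := by
    calc s ^ 2 * ‖deriv G a‖
        = ‖circleAverage (fun z => (z - a) * (f z - f a)) a s‖ := by
          rw [hcongr, circleAverage_sub_center_mul_add_conj isOpen_ball hs hc hH hG]
          simp [abs_of_pos hs]
      _ ≤ s * circleAverage (fun z => ‖f z - f a‖) a s :=
          norm_circleAverage_mul_le hs.le hnorm
  rw [hLam]
  nlinarith

theorem IsHarmonicOn.mul_lam_le_of_continuousOn {f : ℂ → ℂ} {a : ℂ} {r : ℝ} (hr : 0 < r)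
    (hf : IsHarmonicOn f (ball a r)) (hfc : ContinuousOn f (closedBall a r)) :
    r * Lam f a ≤ 2 * circleAverage (fun z => ‖f z - f a‖) a r := by
  have hmean : ContinuousOn (circleAverage (fun z => ‖f z - f a‖) a) (Icc 0 r) :=
    ContinuousOn.circleAverage ((hfc.sub continuousOn_const).norm.mono fun z hz => by
      simpa [dist_eq_norm] using hz.2) fun _ hs => hs.1
  refine ContinuousWithinAt.closure_le (s := Ioo 0 r) ?_
    (continuous_id.mul continuous_const).continuousWithinAt
    (((hmean r (right_mem_Icc.2 hr.le)).mono Ioo_subset_Icc_self).const_mul 2)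
    fun s hs => hf.mul_lam_le hs.1 hs.2
  rw [closure_Ioo hr.ne]
  exact right_mem_Icc.2 hr.le

/-- Lemma 2: if `f` is a harmonic mapping on the closed disk
`{z : |z - a| ≤ r}` with `r > 0` (harmonic inside, continuous up to the boundary),
then `Λ_f(a) ≤ (2/(πr)) ∫₀^{2π} |f(a) - f(a + r e^{iθ})| dθ`. -/
theorem stmt14 (f : ℂ → ℂ) (a : ℂ) (r : ℝ) (hr : 0 < r)
    (hf : IsHarmonicOn f (ball a r)) (hfc : ContinuousOn f (closedBall a r)) :
    Lam f a ≤ (2 / (π * r)) *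
      ∫ θ in (0:ℝ)..(2 * π), ‖f a - f (a + (r : ℂ) * Complex.exp ((θ : ℂ) * Complex.I))‖ := by
  have h := hf.mul_lam_le_of_continuousOn hr hfc
  simp only [circleAverage_def, circleMap, norm_sub_rev _ (f a), smul_eq_mul] at h
  set J := ∫ θ in (0:ℝ)..(2 * π), ‖f a - f (a + (r : ℂ) * Complex.exp ((θ : ℂ) * Complex.I))‖
  have hJ : 0 ≤ J := intervalIntegral.integral_nonneg two_pi_pos.le fun _ _ => norm_nonneg _
  calc Lam f a = r * Lam f a / r := by field_simp
    _ ≤ 2 * ((2 * π)⁻¹ * J) / r := by gcongr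
    _ = J / (π * r) := by field_simp
    _ ≤ 2 / (π * r) * J := by
      rw [div_mul_eq_mul_div]
      gcongr
      linarith
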